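/- Suppose a group G acts by isometries on an ℝ-tree Γ and some element of G acts as a hyperbolic isometry. Let Γ₋ be the intersection of all connected subsets of Γ containing the axis of every hyperbolic element of G. Then Γ₋ is the unique minimal G-invariant subtree of Γ: it is a G-invariant ℝ-tree and is contained in every G-invariant subtree of Γ. -/

import Mathlib

open Set Filter Metric

section Common

variable {H : Type*} [MetricSpace H]

/-- `γ` parametrizes a geodesic from `a` to `b` by arclength on `[0, dist a b]`. -/
def IsGeodesicSegment (γ : ℝ → H) (a b : H) : Prop :=
  γ 0 = a ∧ γ (dist a b) = b ∧
    ∀ s ∈ Set.Icc (0:ℝ) (dist a b), ∀ t ∈ Set.Icc (0:ℝ) (dist a b),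
      dist (γ s) (γ t) = |s - t|

/-- A geodesic space: every pair of points is joined by a geodesic. -/
def GeodesicSpace (H : Type*) [MetricSpace H] : Prop :=
  ∀ a b : H, ∃ γ : ℝ → H, IsGeodesicSegment γ a b

/-- The image of a geodesic segment from `a` to `b`. -/
def segImage (γ : ℝ → H) (a b : H) : Set H :=
  γ '' Set.Icc 0 (dist a b)

/-- A space has `Δ`-thin triangles if each side of every geodesic triangle is contained
in the `Δ`-neighborhood of the union of the other two sides. -/
def ThinTriangles (H : Type*) [MetricSpace H] (Δ : ℝ) : Prop :=
  ∀ a b c : H, ∀ γab γbc γca : ℝ → H,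
    IsGeodesicSegment γab a b → IsGeodesicSegment γbc b c → IsGeodesicSegment γca c a →
      ∀ x ∈ segImage γab a b, ∃ y ∈ segImage γbc b c ∪ segImage γca c a, dist x y ≤ Δ

/-- An arc from `a` to `b`, parametrized (injectively and continuously) by `[0,1]`. -/
def IsArcParam (α : ℝ → H) (a b : H) : Prop :=
  ContinuousOn α (Set.Icc 0 1) ∧ Set.InjOn α (Set.Icc 0 1) ∧ α 0 = a ∧ α 1 = b

/-- An `ℝ`-tree: a metric space in which every pair of points is joined by a geodesic
(so it is a path-metric space and arcs are isometric to intervals of `ℝ`) and in which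
the arc joining two points is unique. -/
def IsRTree (X : Type*) [MetricSpace X] : Prop :=
  (∀ a b : X, ∃ γ : ℝ → X, IsGeodesicSegment γ a b) ∧
  ∀ a b : X, ∀ α β : ℝ → X, IsArcParam α a b → IsArcParam β a b →
    α '' Set.Icc 0 1 = β '' Set.Icc 0 1

/-- The translation length of an isometry. -/
noncomputable def translationLength {X : Type*} [MetricSpace X] (τ : X ≃ᵢ X) : ℝ :=
  ⨅ x : X, dist x (τ x)

/-- The core of an isometry of an `ℝ`-tree: points moved the minimal distance. -/
def isomCore {X : Type*} [MetricSpace X] (τ : X ≃ᵢ X) : Set X :=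
  {x : X | dist x (τ x) = translationLength τ}

/-- An elliptic isometry: one having a fixed point. -/
def IsElliptic {X : Type*} [MetricSpace X] (τ : X ≃ᵢ X) : Prop :=
  ∃ x, τ x = x

/-- A hyperbolic isometry of an `ℝ`-tree: positive translation length, with core
isometric to the real line (its axis). -/
def IsHyperbolicIsom {X : Type*} [MetricSpace X] (τ : X ≃ᵢ X) : Prop :=
  0 < translationLength τ ∧
    ∃ e : ℝ → X, (∀ s t : ℝ, dist (e s) (e t) = |s - t|) ∧ Set.range e = isomCore τ

/-- A metric simplicial tree: an `ℝ`-tree together with a closed discrete set `V` of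
vertices such that each connected component of the complement of `V` is an open edge:
it is the interior of a geodesic segment of positive length with endpoints in `V`. -/
def IsMetricSimplicialTree (X : Type*) [MetricSpace X] : Prop :=
  IsRTree X ∧
    ∃ V : Set X, IsClosed V ∧
      (∀ v ∈ V, ∃ ε > 0, ∀ w ∈ V, dist v w < ε → w = v) ∧
      ∀ x ∈ Vᶜ, ∃ L > (0:ℝ), ∃ f : ℝ → X,
        (∀ s ∈ Set.Icc (0:ℝ) L, ∀ t ∈ Set.Icc (0:ℝ) L, dist (f s) (f t) = |s - t|) ∧
        f '' Set.Ioo 0 L = connectedComponentIn Vᶜ x ∧ f 0 ∈ V ∧ f L ∈ V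

end Common

/-!
In an `ℝ`-tree the Gromov product satisfies the four-point condition
`min ((x|z)_w, (z|y)_w) ≤ (x|y)_w`: the geodesics from `w` to `x` and to `y` coincide up to
time `(x|y)_w`, because beyond their branch point they glue to an arc, which by uniqueness of
arcs is the geodesic from `x` to `y`. Consequently a connected subset contains every point `p`
with `d(a,p) + d(p,b) = d(a,b)` for `a, b` in it, and such metrically convex sets are
connected. So `Γ₋` is connected (it is convex and contains an axis) and it is invariant because
`G` permutes the axes of its hyperbolic elements by conjugation.

For minimality, a hyperbolic `τ` translates its axis `e` by some `c ≠ 0`. If `x` lies in an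
invariant subtree `T`, the points `τⁿ x, τ⁻ⁿ x ∈ T` stay within `d(x, e 0)` of `e (n c)` and
`e (-n c)`, and for large `n` the four-point condition puts any given point of the axis between
them, hence in `T`.
-/

section MetricSpace

variable {X : Type*} [MetricSpace X]

noncomputable def gromovProduct (w x y : X) : ℝ := (dist w x + dist w y - dist x y) / 2

lemma gromovProduct_comm (w x y : X) : gromovProduct w x y = gromovProduct w y x := by
  unfold gromovProduct; rw [dist_comm x y, add_comm (dist w x)]

lemma gromovProduct_nonneg (w x y : X) : 0 ≤ gromovProduct w x y := by
  unfold gromovProduct; linarith [dist_triangle x w y, dist_comm w x]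

lemma gromovProduct_le_dist (w x y : X) : gromovProduct w x y ≤ dist w x := by
  unfold gromovProduct; linarith [dist_triangle w x y]

lemma gromovProduct_eq_zero_iff {w x y : X} :
    gromovProduct w x y = 0 ↔ dist x w + dist w y = dist x y := by
  unfold gromovProduct; rw [dist_comm x w]; constructor <;> intro h <;> linarith

lemma gromovProduct_pos_of_dist_lt {w x y : X} (h : dist y x < dist w x) :
    0 < gromovProduct w x y := by
  unfold gromovProduct; linarith [dist_triangle w y x, dist_comm x y]

lemma continuous_gromovProduct (w x : X) : Continuous (gromovProduct w x) := by
  unfold gromovProduct; fun_prop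

def IsMetricConvex (S : Set X) : Prop :=
  ∀ a ∈ S, ∀ b ∈ S, ∀ p, dist a p + dist p b = dist a b → p ∈ S

lemma isMetricConvex_sInter {F : Set (Set X)} (hF : ∀ S ∈ F, IsMetricConvex S) :
    IsMetricConvex (⋂₀ F) := fun a ha b hb p hp =>
  mem_sInter.2 fun S hS => hF S hS a (ha S hS) b (hb S hS) p hp

namespace IsGeodesicSegment

variable {γ : ℝ → X} {a b : X}

lemma dist_left (h : IsGeodesicSegment γ a b) {u : ℝ} (hu : u ∈ Icc 0 (dist a b)) :
    dist a (γ u) = u := by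
  rw [← h.1, h.2.2 0 (left_mem_Icc.2 dist_nonneg) u hu, zero_sub, abs_neg, abs_of_nonneg hu.1]

lemma dist_right (h : IsGeodesicSegment γ a b) {u : ℝ} (hu : u ∈ Icc 0 (dist a b)) :
    dist (γ u) b = dist a b - u := by
  rw [← h.2.1, h.2.2 u hu _ (right_mem_Icc.2 dist_nonneg), h.2.1,
    abs_of_nonpos (sub_nonpos.2 hu.2), neg_sub]

lemma continuousOn (h : IsGeodesicSegment γ a b) : ContinuousOn γ (Icc 0 (dist a b)) :=
  LipschitzOnWith.continuousOn (K := 1) <| LipschitzOnWith.of_dist_le_mul fun s hs t ht => by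
    rw [h.2.2 s hs t ht, Real.dist_eq, NNReal.coe_one, one_mul]

lemma injOn (h : IsGeodesicSegment γ a b) : InjOn γ (Icc 0 (dist a b)) := fun s hs t ht hst => by
  have := h.2.2 s hs t ht
  rw [hst, dist_self, eq_comm, abs_eq_zero, sub_eq_zero] at this
  exact this

end IsGeodesicSegment

lemma isArcParam_comp_mul {α : ℝ → X} {L : ℝ} (hL : 0 < L) (hc : ContinuousOn α (Icc 0 L))
    (hi : InjOn α (Icc 0 L)) : IsArcParam (fun w => α (w * L)) (α 0) (α L) := by
  have hmaps : MapsTo (· * L) (Icc (0 : ℝ) 1) (Icc 0 L) := fun w hw =>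
    ⟨mul_nonneg hw.1 hL.le, mul_le_of_le_one_left hL.le hw.2⟩
  refine ⟨hc.comp (by fun_prop) hmaps, fun s hs t ht hst => ?_, by simp, by simp⟩
  exact mul_right_cancel₀ hL.ne' (hi (hmaps hs) (hmaps ht) hst)

lemma image_comp_mul_Icc {β : Type*} (α : ℝ → β) {L : ℝ} (hL : 0 < L) :
    (fun w => α (w * L)) '' Icc 0 1 = α '' Icc 0 L := by
  rw [show (fun w => α (w * L)) = α ∘ (· * L) from rfl, image_comp,
    image_mul_right_Icc zero_le_one hL.le, zero_mul, one_mul]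

lemma isConnected_of_isMetricConvex (hX : GeodesicSpace X) {S : Set X} (hne : S.Nonempty)
    (hS : IsMetricConvex S) : IsConnected S := by
  obtain ⟨x, hx⟩ := hne
  refine IsPathConnected.isConnected ⟨x, hx, fun {y} hy => ?_⟩
  obtain ⟨γ, hγ⟩ := hX x y
  have hmaps : ∀ w : unitInterval, (w : ℝ) * dist x y ∈ Icc 0 (dist x y) := fun w =>
    ⟨mul_nonneg w.2.1 dist_nonneg, mul_le_of_le_one_left dist_nonneg w.2.2⟩
  refine ⟨⟨⟨fun w => γ (w * dist x y), hγ.continuousOn.comp_continuous (by fun_prop) hmaps⟩,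
    by simpa using hγ.1, by simpa using hγ.2.1⟩, fun w => hS x hx y hy _ ?_⟩
  change dist x (γ _) + dist (γ _) y = _
  rw [hγ.dist_left (hmaps w), hγ.dist_right (hmaps w), add_sub_cancel]

end MetricSpace

namespace IsRTree

variable {X : Type*} [MetricSpace X]

lemma image_Icc_eq_of_injOn (hX : IsRTree X) {α β : ℝ → X} {L M : ℝ} (hL : 0 < L) (hM : 0 < M)
    (hαc : ContinuousOn α (Icc 0 L)) (hαi : InjOn α (Icc 0 L))
    (hβc : ContinuousOn β (Icc 0 M)) (hβi : InjOn β (Icc 0 M))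
    (h0 : α 0 = β 0) (h1 : α L = β M) : α '' Icc 0 L = β '' Icc 0 M := by
  rw [← image_comp_mul_Icc α hL, ← image_comp_mul_Icc β hM]
  refine hX.2 _ _ _ _ (isArcParam_comp_mul hL hαc hαi) ?_
  rw [h0, h1]
  exact isArcParam_comp_mul hM hβc hβi

lemma eqOn_of_isGeodesicSegment (hX : IsRTree X) {γ δ : ℝ → X} {a b : X}
    (hγ : IsGeodesicSegment γ a b) (hδ : IsGeodesicSegment δ a b) :
    EqOn γ δ (Icc 0 (dist a b)) := by
  intro u hu
  rcases (dist_nonneg (x := a) (y := b)).eq_or_lt with hab | hab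
  · rw [← hab, Icc_self, mem_singleton_iff] at hu
    rw [hu, hγ.1, hδ.1]
  have himage := hX.image_Icc_eq_of_injOn hab hab hγ.continuousOn hγ.injOn hδ.continuousOn
    hδ.injOn (hγ.1.trans hδ.1.symm) (hγ.2.1.trans hδ.2.1.symm)
  obtain ⟨v, hv, hvu⟩ := himage ▸ mem_image_of_mem γ hu
  rw [← hvu, ← hγ.dist_left hu, ← hvu, hδ.dist_left hv]

noncomputable def geo (hX : IsRTree X) (a b : X) : ℝ → X :=
  fun u => (hX.1 a b).choose (projIcc 0 (dist a b) dist_nonneg u)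

section Geo

variable (hX : IsRTree X)

lemma isGeodesicSegment_geo (a b : X) : IsGeodesicSegment (hX.geo a b) a b := by
  obtain ⟨h0, h1, hiso⟩ := (hX.1 a b).choose_spec
  refine ⟨?_, ?_, fun s hs t ht => ?_⟩
  · rw [geo, projIcc_left]; exact h0
  · rw [geo, projIcc_right]; exact h1
  · rw [geo, geo, projIcc_of_mem _ hs, projIcc_of_mem _ ht]; exact hiso s hs t ht

@[fun_prop] lemma continuous_geo (a b : X) : Continuous (hX.geo a b) :=
  (hX.1 a b).choose_spec.continuousOn.comp_continuous (by fun_prop) fun u => (projIcc _ _ _ u).2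

@[simp] lemma geo_zero (a b : X) : hX.geo a b 0 = a := (hX.isGeodesicSegment_geo a b).1

@[simp] lemma geo_dist (a b : X) : hX.geo a b (dist a b) = b := (hX.isGeodesicSegment_geo a b).2.1

lemma dist_geo_left {a b : X} {u : ℝ} (hu : u ∈ Icc 0 (dist a b)) :
    dist a (hX.geo a b u) = u :=
  (hX.isGeodesicSegment_geo a b).dist_left hu

lemma dist_geo_right {a b : X} {u : ℝ} (hu : u ∈ Icc 0 (dist a b)) :
    dist (hX.geo a b u) b = dist a b - u :=
  (hX.isGeodesicSegment_geo a b).dist_right hu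

lemma geo_eq_of_isGeodesicSegment {γ : ℝ → X} {a b : X} (hγ : IsGeodesicSegment γ a b) {u : ℝ}
    (hu : u ∈ Icc 0 (dist a b)) : hX.geo a b u = γ u :=
  hX.eqOn_of_isGeodesicSegment (hX.isGeodesicSegment_geo a b) hγ hu

lemma geo_geo {a b : X} {s t u : ℝ} (hs : 0 ≤ s) (hst : s ≤ t) (ht : t ≤ dist a b)
    (hu : u ∈ Icc 0 (t - s)) : hX.geo (hX.geo a b s) (hX.geo a b t) u = hX.geo a b (s + u) := by
  have hiso := (hX.isGeodesicSegment_geo a b).2.2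
  have hsI : s ∈ Icc 0 (dist a b) := ⟨hs, hst.trans ht⟩
  have htI : t ∈ Icc 0 (dist a b) := ⟨hs.trans hst, ht⟩
  have hd : dist (hX.geo a b s) (hX.geo a b t) = t - s := by
    rw [hiso s hsI t htI, abs_sub_comm, abs_of_nonneg (sub_nonneg.2 hst)]
  refine hX.geo_eq_of_isGeodesicSegment (γ := fun v => hX.geo a b (s + v))
    ⟨by simp, by simp only [hd, add_sub_cancel], ?_⟩ (hd ▸ hu)
  intro v hv w hw
  rw [hd] at hv hw
  rw [hiso _ ⟨by linarith [hv.1], by linarith [hv.2]⟩ _ ⟨by linarith [hw.1], by linarith [hw.2]⟩,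
    add_sub_add_left_eq_sub]

/-- The geodesics from `m` to `b` and to `c`, meeting only at `m`, glue to an arc from `b`
to `c`. -/
lemma dist_add_dist_eq_of_geo_eq_geo {m b c : X}
    (h : ∀ u ∈ Icc 0 (dist m b), ∀ v ∈ Icc 0 (dist m c), hX.geo m b u = hX.geo m c v → u = 0) :
    dist b m + dist m c = dist b c := by
  rcases (dist_nonneg (x := m) (y := b)).eq_or_lt with hb | hb
  · obtain rfl : m = b := dist_eq_zero.1 hb.symm
    rw [dist_self, zero_add]
  have hbc : b ≠ c := by
    rintro rfl
    exact hb.ne' (h _ (right_mem_Icc.2 dist_nonneg) _ (right_mem_Icc.2 dist_nonneg) rfl)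
  set α : ℝ → X := fun v =>
    if v ≤ dist m b then hX.geo m b (dist m b - v) else hX.geo m c (v - dist m b)
  have hα_left : ∀ v ≤ dist m b, α v = hX.geo m b (dist m b - v) := fun v hv => if_pos hv
  have hα_right : ∀ v, dist m b ≤ v → α v = hX.geo m c (v - dist m b) := by
    intro v hv
    rcases hv.eq_or_lt with rfl | hv
    · simp [α]
    · exact if_neg (not_le.2 hv)
  have hα_cont : Continuous α :=
    Continuous.if_le (by fun_prop) (by fun_prop) continuous_id continuous_const
      fun v hv => by simp [hv]
  have hα_dist : ∀ v ∈ Icc 0 (dist m b + dist m c), dist m (α v) = |v - dist m b| := by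
    rintro v ⟨hv₀, hv₁⟩
    rcases le_total v (dist m b) with hv | hv
    · rw [hα_left v hv, hX.dist_geo_left ⟨by linarith, by linarith⟩, abs_of_nonpos (by linarith)]
      ring
    · rw [hα_right v hv, hX.dist_geo_left ⟨by linarith, by linarith⟩, abs_of_nonneg (by linarith)]
  have hα_inj : InjOn α (Icc 0 (dist m b + dist m c)) := by
    intro v hv v' hv' hvv'
    have hd : |v - dist m b| = |v' - dist m b| := by rw [← hα_dist v hv, hvv', hα_dist v' hv']
    obtain hd | hd := abs_eq_abs.1 hd
    · linarith
    wlog hv₁ : v ≤ dist m b generalizing v v'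
    · exact (this hv' hv hvv'.symm (by linarith) (by linarith) (by linarith)).symm
    rw [hα_left v hv₁, hα_right v' (by linarith)] at hvv'
    have := h _ ⟨by linarith, by linarith [hv.1]⟩ _ ⟨by linarith, by linarith [hv'.2]⟩ hvv'
    linarith
  have himage := hX.image_Icc_eq_of_injOn (by positivity) (dist_pos.2 hbc)
    hα_cont.continuousOn hα_inj (hX.isGeodesicSegment_geo b c).continuousOn
    (hX.isGeodesicSegment_geo b c).injOn (by simp [hα_left 0 hb.le])
    (by simp [hα_right _ (le_add_of_nonneg_right dist_nonneg)])
  obtain ⟨w, hw, hwm⟩ : m ∈ hX.geo b c '' Icc 0 (dist b c) := by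
    rw [← himage]
    exact ⟨dist m b, ⟨hb.le, le_add_of_nonneg_right dist_nonneg⟩, by simp [hα_left _ le_rfl]⟩
  rw [← hwm, hX.dist_geo_left hw, hX.dist_geo_right hw, add_sub_cancel]

lemma exists_geo_eq_geo_iff (a b c : X) :
    ∃ ℓ, 0 ≤ ℓ ∧ ℓ ≤ dist a b ∧ ℓ ≤ dist a c ∧ ∀ u, 0 ≤ u → u ≤ dist a b → u ≤ dist a c →
      (hX.geo a b u = hX.geo a c u ↔ u ≤ ℓ) := by
  set A := Icc 0 (min (dist a b) (dist a c)) ∩ {u | hX.geo a b u = hX.geo a c u}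
  have hA : IsCompact A :=
    isCompact_Icc.inter_right (isClosed_eq (hX.continuous_geo a b) (hX.continuous_geo a c))
  obtain ⟨ℓ, ⟨⟨hℓ₀, hℓ⟩, hℓeq⟩, hℓmax⟩ :=
    hA.exists_isGreatest ⟨0, ⟨left_mem_Icc.2 (le_min dist_nonneg dist_nonneg), by simp⟩⟩
  refine ⟨ℓ, hℓ₀, (le_min_iff.1 hℓ).1, (le_min_iff.1 hℓ).2, fun u hu₀ hub huc => ⟨fun hu =>
    hℓmax ⟨⟨hu₀, le_min hub huc⟩, hu⟩, fun hu => ?_⟩⟩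
  have hrestrict : ∀ d : X, ℓ ≤ dist a d →
      hX.geo a d u = hX.geo a (hX.geo a d ℓ) u := fun d hℓd => by
    simpa using (hX.geo_geo le_rfl hℓ₀ hℓd ⟨hu₀, by simpa using hu⟩).symm
  rw [hrestrict b (le_min_iff.1 hℓ).1, hrestrict c (le_min_iff.1 hℓ).2, hℓeq]

/-- The branch point `ℓ` of the two geodesics is `(b|c)_a`, because their tails beyond it form
the geodesic from `b` to `c`. -/
lemma geo_eq_geo_of_le_gromovProduct {a b c : X} {u : ℝ} (hu₀ : 0 ≤ u)
    (hu : u ≤ gromovProduct a b c) : hX.geo a b u = hX.geo a c u := by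
  obtain ⟨ℓ, hℓ₀, hℓb, hℓc, hℓ⟩ := hX.exists_geo_eq_geo_iff a b c
  have hmc : hX.geo a c ℓ = hX.geo a b ℓ := ((hℓ ℓ hℓ₀ hℓb hℓc).2 le_rfl).symm
  have htail : ∀ d : X, ℓ ≤ dist a d → ∀ v ∈ Icc 0 (dist a d - ℓ),
      hX.geo (hX.geo a d ℓ) d v = hX.geo a d (ℓ + v) := fun d hℓd v hv => by
    simpa using hX.geo_geo hℓ₀ hℓd le_rfl hv
  have hbranch : dist b (hX.geo a b ℓ) + dist (hX.geo a b ℓ) c = dist b c := by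
    refine hX.dist_add_dist_eq_of_geo_eq_geo fun v hv w hw hvw => ?_
    rw [hX.dist_geo_right ⟨hℓ₀, hℓb⟩] at hv
    rw [← hmc, hX.dist_geo_right ⟨hℓ₀, hℓc⟩] at hw
    rw [htail b hℓb v hv, ← hmc, htail c hℓc w hw] at hvw
    have hvw' : v = w := by
      have := congrArg (dist a) hvw
      rwa [hX.dist_geo_left ⟨by linarith [hv.1], by linarith [hv.2]⟩,
        hX.dist_geo_left ⟨by linarith [hw.1], by linarith [hw.2]⟩, add_right_inj] at this
    subst hvw'
    have := (hℓ (ℓ + v) (by linarith [hv.1]) (by linarith [hv.2]) (by linarith [hw.2])).1 hvw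
    linarith [hv.1]
  have hℓ_eq : ℓ = gromovProduct a b c := by
    rw [dist_comm, hX.dist_geo_right ⟨hℓ₀, hℓb⟩, ← hmc, hX.dist_geo_right ⟨hℓ₀, hℓc⟩] at hbranch
    unfold gromovProduct
    linarith
  exact (hℓ u hu₀ (hu.trans (gromovProduct_le_dist a b c))
    (hu.trans ((gromovProduct_comm a b c).trans_le (gromovProduct_le_dist a c b)))).2 (hℓ_eq ▸ hu)

end Geo

/-- The four-point condition: an `ℝ`-tree is `0`-hyperbolic. -/
theorem min_gromovProduct_le (hX : IsRTree X) (w x y z : X) :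
    min (gromovProduct w x z) (gromovProduct w z y) ≤ gromovProduct w x y := by
  set μ := min (gromovProduct w x z) (gromovProduct w z y)
  have hμ₀ : 0 ≤ μ := le_min (gromovProduct_nonneg _ _ _) (gromovProduct_nonneg _ _ _)
  have hμxz : μ ≤ gromovProduct w x z := min_le_left _ _
  have hμzy : μ ≤ gromovProduct w z y := min_le_right _ _
  have hμx : μ ≤ dist w x := hμxz.trans (gromovProduct_le_dist _ _ _)
  have hμy : μ ≤ dist w y :=
    hμzy.trans ((gromovProduct_comm _ _ _).trans_le (gromovProduct_le_dist _ _ _))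
  have hp : hX.geo w x μ = hX.geo w y μ :=
    (hX.geo_eq_geo_of_le_gromovProduct hμ₀ hμxz).trans
      (hX.geo_eq_geo_of_le_gromovProduct hμ₀ hμzy)
  have hxy := dist_triangle x (hX.geo w x μ) y
  rw [dist_comm x (hX.geo w x μ), hX.dist_geo_right ⟨hμ₀, hμx⟩, hp,
    hX.dist_geo_right ⟨hμ₀, hμy⟩] at hxy
  unfold gromovProduct
  linarith

lemma gromovProduct_eq_zero_of_dist_lt (hX : IsRTree X) {w x y z : X}
    (hxz : gromovProduct w x z = 0) (hy : dist y z < dist w z) : gromovProduct w x y = 0 := by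
  have h := hX.min_gromovProduct_le w x z y
  rw [hxz, min_le_iff] at h
  refine le_antisymm (h.resolve_right ?_) (gromovProduct_nonneg w x y)
  rw [not_le, gromovProduct_comm]
  exact gromovProduct_pos_of_dist_lt hy

theorem isMetricConvex_of_isPreconnected (hX : IsRTree X) {S : Set X} (hS : IsPreconnected S) :
    IsMetricConvex S := by
  intro a ha b hb p hp
  by_contra hpS
  -- `S` would be split by the open sets of those `z` for which `p` does not, resp. does, lie
  -- between `a` and `z`.
  have hU : IsOpen {z | 0 < gromovProduct p a z} :=
    isOpen_lt continuous_const (continuous_gromovProduct p a)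
  have hV : IsOpen {z | z ≠ p ∧ gromovProduct p a z = 0} := by
    refine isOpen_iff.2 fun z ⟨hzp, hz⟩ => ⟨dist z p, dist_pos.2 hzp, fun y hy => ?_⟩
    rw [mem_ball, dist_comm z p] at hy
    refine ⟨fun hyp => ?_, hX.gromovProduct_eq_zero_of_dist_lt hz hy⟩
    rw [hyp, dist_comm] at hy
    exact hy.false
  have hne : ∀ z ∈ S, z ≠ p := fun z hz hzp => hpS (hzp ▸ hz)
  have haU : 0 < gromovProduct p a a := by
    unfold gromovProduct; linarith [dist_self a, dist_pos.2 (hne a ha).symm]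
  obtain ⟨z, -, hzU, -, hzV⟩ := hS _ _ hU hV
    (fun z hz => (gromovProduct_nonneg p a z).lt_or_eq.imp id fun h => ⟨hne z hz, h.symm⟩)
    ⟨a, ha, haU⟩ ⟨b, hb, hne b hb, gromovProduct_eq_zero_iff.2 hp⟩
  exact hzU.ne' hzV

lemma dist_add_dist_eq_of_dist_lt (hX : IsRTree X) {w P Q y y' : X}
    (hw : dist P w + dist w Q = dist P Q) (hy : dist y P < dist w P) (hy' : dist y' Q < dist w Q) :
    dist y w + dist w y' = dist y y' := by
  have hQP := gromovProduct_eq_zero_iff.2 hw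
  rw [gromovProduct_comm] at hQP
  have hyQ := hX.gromovProduct_eq_zero_of_dist_lt hQP hy
  rw [gromovProduct_comm] at hyQ
  exact gromovProduct_eq_zero_iff.1 (hX.gromovProduct_eq_zero_of_dist_lt hyQ hy')

end IsRTree

lemma Isometry.eq_add_or_eq_neg_add {f : ℝ → ℝ} (hf : Isometry f) :
    (∀ s, f s = s + f 0) ∨ ∀ s, f s = -s + f 0 := by
  have hsq : ∀ s u, (f s - f u) ^ 2 = (s - u) ^ 2 := fun s u => by
    rw [← sq_abs, ← Real.dist_eq, hf.dist_eq, Real.dist_eq, sq_abs]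
  have hlin : ∀ s, (f 1 - f 0) * (f s - f 0) = s := fun s => by
    linear_combination (hsq s 0 - hsq s 1 + hsq 1 0) / 2
  rcases sq_eq_one_iff.1 ((hsq 1 0).trans (by norm_num)) with h1 | h1
  · exact Or.inl fun s => by linarith [h1 ▸ hlin s]
  · exact Or.inr fun s => by linarith [h1 ▸ hlin s]

section Isometries

variable {X : Type*} [MetricSpace X]

/-- `τ` cannot reflect its axis, since a reflection would fix a point of it. -/
lemma IsHyperbolicIsom.exists_translation {τ : X ≃ᵢ X} (hτ : IsHyperbolicIsom τ) :
    ∃ e : ℝ → X, (∀ s t, dist (e s) (e t) = |s - t|) ∧ range e = isomCore τ ∧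
      ∃ c ≠ 0, ∀ s, τ (e s) = e (s + c) := by
  obtain ⟨hpos, e, he, hrange⟩ := hτ
  have hcore : ∀ s, dist (e s) (τ (e s)) = translationLength τ := fun s =>
    (hrange ▸ mem_range_self s : e s ∈ isomCore τ)
  have hmoves : ∀ s, τ (e s) ≠ e s := fun s hs => by
    have := hcore s
    rw [hs, dist_self] at this
    linarith
  have hmaps : ∀ s, τ (e s) ∈ range e := fun s => by
    rw [hrange]
    show dist _ _ = _
    rw [τ.dist_eq]
    exact hcore s
  choose f hf using hmaps
  have hf_iso : Isometry f := Isometry.of_dist_eq fun s u => by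
    rw [Real.dist_eq, Real.dist_eq, ← he, hf, hf, τ.dist_eq, he]
  refine ⟨e, he, hrange, ?_⟩
  rcases hf_iso.eq_add_or_eq_neg_add with hf' | hf'
  · refine ⟨f 0, fun h0 => hmoves 0 ?_, fun s => by rw [← hf, hf']⟩
    rw [← hf, h0]
  · exact (hmoves (f 0 / 2) (by rw [← hf, hf']; congr 1; ring)).elim

lemma dist_conj_apply (φ τ : X ≃ᵢ X) (x : X) :
    dist x ((φ * τ * φ⁻¹) x) = dist (φ⁻¹ x) (τ (φ⁻¹ x)) := by
  show dist x (φ (τ (φ⁻¹ x))) = _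
  rw [← φ.dist_eq (φ⁻¹ x), φ.apply_inv_self]

lemma translationLength_conj (φ τ : X ≃ᵢ X) :
    translationLength (φ * τ * φ⁻¹) = translationLength τ := by
  simp_rw [translationLength, dist_conj_apply]
  exact φ⁻¹.surjective.iInf_comp fun y => dist y (τ y)

lemma isomCore_conj (φ τ : X ≃ᵢ X) : isomCore (φ * τ * φ⁻¹) = φ '' isomCore τ := by
  rw [← φ.preimage_symm]
  ext x
  simp only [isomCore, mem_preimage, dist_conj_apply, translationLength_conj]
  rfl

lemma IsHyperbolicIsom.conj {τ : X ≃ᵢ X} (hτ : IsHyperbolicIsom τ) (φ : X ≃ᵢ X) :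
    IsHyperbolicIsom (φ * τ * φ⁻¹) := by
  obtain ⟨hpos, e, he, hrange⟩ := hτ
  refine ⟨(translationLength_conj φ τ).symm ▸ hpos, φ ∘ e, fun s t => ?_, ?_⟩
  · rw [Function.comp_apply, Function.comp_apply, φ.dist_eq, he]
  · rw [range_comp, hrange, isomCore_conj]

lemma isHyperbolicIsom_conj_iff {φ τ : X ≃ᵢ X} :
    IsHyperbolicIsom (φ * τ * φ⁻¹) ↔ IsHyperbolicIsom τ := by
  refine ⟨fun h => ?_, fun h => h.conj φ⟩
  convert h.conj φ⁻¹ using 1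
  group

lemma dist_add_dist_eq_of_abs_le {e : ℝ → X} (he : ∀ s t, dist (e s) (e t) = |s - t|)
    {s a : ℝ} (h : |s| ≤ |a|) : dist (e a) (e s) + dist (e s) (e (-a)) = dist (e a) (e (-a)) := by
  have hsa := abs_le.1 h
  rw [he, he, he]
  rcases abs_cases a with ⟨ha, -⟩ | ⟨ha, -⟩ <;> rw [ha] at hsa
  · rw [abs_of_nonneg (by linarith), abs_of_nonneg (by linarith), abs_of_nonneg (by linarith)]
    ring
  · rw [abs_of_nonpos (by linarith), abs_of_nonpos (by linarith), abs_of_nonpos (by linarith)]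
    ring

lemma exists_mem_dist_eq_of_apply_eq_add (φ : X ≃ᵢ X) {T : Set X} (hT : φ '' T = T)
    {e : ℝ → X} {c : ℝ} (hφ : ∀ s, φ (e s) = e (s + c)) {x : X} (hx : x ∈ T) (n : ℕ) :
    ∃ y ∈ T, dist y (e (n * c)) = dist x (e 0) := by
  induction n with
  | zero => exact ⟨x, hx, by simp⟩
  | succ n ih =>
    obtain ⟨y, hy, hyd⟩ := ih
    refine ⟨φ y, hT ▸ mem_image_of_mem φ hy, ?_⟩
    rw [Nat.cast_succ, add_one_mul, ← hφ, φ.dist_eq, hyd]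

/-- Far enough along the axis, the orbit points `τⁿ x` and `τ⁻ⁿ x` of `x ∈ T` are closer to
the axis points `e (n c)` and `e (-n c)` than `e s` is, so `e s` lies between them. -/
theorem IsRTree.isomCore_subset_of_image_eq (hX : IsRTree X) {τ : X ≃ᵢ X}
    (hτ : IsHyperbolicIsom τ) {T : Set X} (hT : IsMetricConvex T) (hne : T.Nonempty)
    (hinv : τ '' T = T) : isomCore τ ⊆ T := by
  obtain ⟨e, he, hrange, c, hc, hτe⟩ := hτ.exists_translation
  obtain ⟨x, hx⟩ := hne
  have hinv' : τ.symm '' T = T := by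
    rw [τ.image_symm]
    nth_rw 1 [← hinv]
    exact τ.injective.preimage_image T
  have hτe' : ∀ s, τ.symm (e s) = e (s + -c) := fun s =>
    τ.symm_apply_eq.2 (by rw [hτe, neg_add_cancel_right])
  rw [← hrange]
  rintro _ ⟨s, rfl⟩
  obtain ⟨n, hn⟩ := exists_nat_gt ((|s| + dist x (e 0)) / |c|)
  set a : ℝ := n * c
  have ha : |s| + dist x (e 0) < |a| := by
    rw [abs_mul, Nat.abs_cast]
    exact (div_lt_iff₀ (abs_pos.2 hc)).1 hn
  obtain ⟨y, hyT, hy⟩ := exists_mem_dist_eq_of_apply_eq_add τ hinv hτe hx n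
  obtain ⟨y', hy'T, hy'⟩ := exists_mem_dist_eq_of_apply_eq_add τ.symm hinv' hτe' hx n
  rw [mul_neg] at hy'
  refine hT y hyT y' hy'T _ (hX.dist_add_dist_eq_of_dist_lt (P := e a) (Q := e (-a))
    (dist_add_dist_eq_of_abs_le he ?_) ?_ ?_)
  · linarith [dist_nonneg (x := x) (y := e 0)]
  · rw [hy, he, abs_sub_comm]
    linarith [abs_sub_abs_le_abs_sub a s]
  · have := abs_sub_abs_le_abs_sub a (-s)
    rw [abs_neg, sub_neg_eq_add, add_comm] at this
    rw [hy', he, sub_neg_eq_add]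
    linarith

end Isometries

lemma image_sInter_eq_of_forall_image_mem {G X : Type*} [Group G] [MetricSpace X]
    (σ : G →* (X ≃ᵢ X)) {F : Set (Set X)} (hF : ∀ g, ∀ S ∈ F, σ g '' S ∈ F) (g : G) :
    σ g '' ⋂₀ F = ⋂₀ F := by
  have hsub : ∀ g, σ g '' ⋂₀ F ⊆ ⋂₀ F := by
    rintro g _ ⟨x, hx, rfl⟩ S hS
    obtain ⟨y, hy, rfl⟩ := hx _ (hF g⁻¹ S hS)
    simpa using hy
  exact (hsub g).antisymm fun x hx => ⟨σ g⁻¹ x, hsub g⁻¹ ⟨x, hx, rfl⟩, by simp⟩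

/-- If a group acts by isometries on an `ℝ`-tree and some element acts
hyperbolically, then the intersection `Γ₋` of all connected subsets containing the axis of
every hyperbolic element is the unique minimal `G`-invariant subtree: it is an invariant
nonempty connected subset contained in every invariant subtree. -/
theorem minimal_invariant_subtree {G : Type*} [Group G]
    {X : Type*} [MetricSpace X] (hX : IsRTree X)
    (σ : G →* (X ≃ᵢ X)) (hhyp : ∃ g : G, IsHyperbolicIsom (σ g)) :
    IsConnected (⋂₀ {S : Set X | IsConnected S ∧
        ∀ g : G, IsHyperbolicIsom (σ g) → isomCore (σ g) ⊆ S}) ∧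
    (∀ g : G, σ g '' (⋂₀ {S : Set X | IsConnected S ∧
        ∀ g' : G, IsHyperbolicIsom (σ g') → isomCore (σ g') ⊆ S})
      = ⋂₀ {S : Set X | IsConnected S ∧
        ∀ g' : G, IsHyperbolicIsom (σ g') → isomCore (σ g') ⊆ S}) ∧
    (∀ T : Set X, IsConnected T → (∀ g : G, σ g '' T = T) →
      ⋂₀ {S : Set X | IsConnected S ∧
        ∀ g' : G, IsHyperbolicIsom (σ g') → isomCore (σ g') ⊆ S} ⊆ T) := by
  set F : Set (Set X) := {S | IsConnected S ∧
    ∀ g : G, IsHyperbolicIsom (σ g) → isomCore (σ g) ⊆ S}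
  have hconv : IsMetricConvex (⋂₀ F) :=
    isMetricConvex_sInter fun S hS => hX.isMetricConvex_of_isPreconnected hS.1.isPreconnected
  have hne : (⋂₀ F).Nonempty := by
    obtain ⟨g₀, hg₀⟩ := hhyp
    obtain ⟨e, -, he⟩ := hg₀.2
    exact ⟨e 0, fun S hS => hS.2 g₀ hg₀ (he ▸ mem_range_self 0)⟩
  have hF : ∀ g, ∀ S ∈ F, σ g '' S ∈ F := by
    refine fun g S hS => ⟨hS.1.image _ (σ g).continuous.continuousOn, fun g' hg' => ?_⟩
    have hσ : σ g' = σ g * σ (g⁻¹ * g' * g) * (σ g)⁻¹ := by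
      rw [← map_inv, ← map_mul, ← map_mul]
      group
    rw [hσ, isHyperbolicIsom_conj_iff] at hg'
    rw [hσ, isomCore_conj]
    exact image_mono (hS.2 _ hg')
  exact ⟨isConnected_of_isMetricConvex hX.1 hne hconv, image_sInter_eq_of_forall_image_mem σ hF,
    fun T hT hTinv => sInter_subset_of_mem ⟨hT, fun g hg => hX.isomCore_subset_of_image_eq hg
      (hX.isMetricConvex_of_isPreconnected hT.isPreconnected) hT.nonempty (hTinv g)⟩⟩
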